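/- arXiv:2105.00179 — 4 statements merged into one kernel-verified Lean document; each statement's English description precedes it below -/
import Mathlib

section
/- For every integer n ≥ 3 there exist positive integers c_{ij} (for 1 ≤ j ≤ i ≤ n) with c₁₁ = 1, with c_{ij} = c_{(j+1)j} for all i, j with j < i ≤ n (each subdiagonal column is constant), and with c_{(i+1)i} ≤ 9 for all i ∈ {1, …, n−1}, such that the following holds. Set σ = Σ_{i=1}^{n−1} c_{(i+1)i}². For every real ε with 0 < ε < min{1/σ, min_{1≤i≤n} 1/(2c_{ii}), 1/12} and every function f defined on a set D ⊆ ℝⁿ containing {0, e₁, …, eₙ} with f(0) = 0, satisfying |‖f(x) − f(y)‖ − ‖x − y‖| ≤ ε for all x, y ∈ {0, e₁, …, eₙ}, and whose values on the basis have the triangular form f(eᵢ) = (e′ᵢ₁, …, e′ᵢᵢ, 0, …, 0) with e′ᵢᵢ ≥ 0, one has −c_{ij}·ε ≤ e′ᵢⱼ ≤ c_{ij}·ε for all 1 ≤ j < i ≤ n, and 1 − c_{ii}·ε ≤ e′ᵢᵢ ≤ 1 + ε for all 1 ≤ i ≤ n. -/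
/-! The images `vᵢ = f(eᵢ)` are almost orthonormal: `‖vᵢ‖` is within `ε` of `1`, and polarization
with `‖vᵢ - vₖ‖ ≈ √2` gives `|⟪vᵢ, vₖ⟫| ≤ 4ε` for `i ≠ k`. As the `vᵢ` are lower triangular,
`⟪vᵢ, vₖ⟫ = vᵢₖ vₖₖ + ∑_{j<k} vᵢⱼ vₖⱼ`. By strong induction on the column `k`, all entries of the
earlier columns are at most `6ε`, so the sum is at most `36 k ε² ≤ ε`. Applied to `‖vₖ‖²` this
gives `vₖₖ ≥ 1 - 2ε`, and then `|vᵢₖ| vₖₖ ≤ 5ε` gives `|vᵢₖ| ≤ 6ε` for `i > k`. -/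

open Finset RealInnerProductSpace

theorem Orthonormal.norm_sub_eq_sqrt_two {ι E : Type*} [NormedAddCommGroup E]
    [InnerProductSpace ℝ E] {v : ι → E} (hv : Orthonormal ℝ v) {i j : ι} (hij : i ≠ j) :
    ‖v i - v j‖ = √2 := by
  rw [← sq_eq_sq₀ (norm_nonneg _) (Real.sqrt_nonneg 2), Real.sq_sqrt zero_le_two,
    norm_sub_sq_real, hv.inner_eq_zero hij, hv.norm_eq_one, hv.norm_eq_one]
  norm_num

theorem abs_real_inner_le_of_almost_orthonormal {E : Type*} [NormedAddCommGroup E]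
    [InnerProductSpace ℝ E] {x y : E} {ε : ℝ} (hx : |‖x‖ - 1| ≤ ε) (hy : |‖y‖ - 1| ≤ ε)
    (hxy : |‖x - y‖ - √2| ≤ ε) (hε : ε ≤ 1) : |⟪x, y⟫| ≤ 4 * ε := by
  have h2 : 2 * ⟪x, y⟫ = ‖x‖ ^ 2 + ‖y‖ ^ 2 - ‖x - y‖ ^ 2 := by
    rw [norm_sub_sq_real]; ring
  have hs : √2 ^ 2 = 2 := Real.sq_sqrt zero_le_two
  have hs1 : 1 ≤ √2 := Real.one_le_sqrt.2 one_le_two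
  have hs32 : √2 ≤ 3 / 2 := by nlinarith
  rw [abs_le] at hx hy hxy ⊢
  constructor <;> nlinarith [norm_nonneg x, norm_nonneg y, norm_nonneg (x - y)]

theorem EuclideanSpace.inner_eq_mul_add_sum_Iio {n : ℕ} {x y : EuclideanSpace ℝ (Fin n)}
    {k : Fin n} (hx : ∀ j, k < j → x j = 0) :
    ⟪y, x⟫ = y k * x k + ∑ j ∈ Iio k, y j * x j := by
  have hsupp : ∀ j ∈ univ, j ∉ Iic k → y j * x j = 0 := fun j _ hj => by
    rw [hx j (not_le.1 (mem_Iic.not.1 hj)), mul_zero]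
  have hcoord : ⟪y, x⟫ = ∑ j, y j * x j := by
    simp only [PiLp.inner_apply, RCLike.inner_apply, conj_trivial, mul_comm]
  rw [hcoord, ← sum_subset (subset_univ _) hsupp, ← Iio_insert, sum_insert notMem_Iio_self]

structure TriangularAlmostOrthonormal {n : ℕ} (v : Fin n → EuclideanSpace ℝ (Fin n)) (ε : ℝ) :
    Prop where
  apply_eq_zero_of_lt : ∀ i j, i < j → v i j = 0
  diag_nonneg : ∀ i, 0 ≤ v i i
  abs_norm_sub_one_le : ∀ i, |‖v i‖ - 1| ≤ ε
  abs_inner_le : ∀ i j, i ≠ j → |⟪v i, v j⟫| ≤ 4 * ε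

namespace TriangularAlmostOrthonormal

variable {n : ℕ} {v : Fin n → EuclideanSpace ℝ (Fin n)} {ε : ℝ}

theorem eps_nonneg (hv : TriangularAlmostOrthonormal v ε) (k : Fin n) : 0 ≤ ε :=
  (abs_nonneg _).trans (hv.abs_norm_sub_one_le k)

theorem apply_le (hv : TriangularAlmostOrthonormal v ε) (i j : Fin n) : v i j ≤ 1 + ε := by
  have := (abs_le.1 (hv.abs_norm_sub_one_le i)).2
  linarith [le_abs_self (v i j), PiLp.norm_apply_le (v i) j, Real.norm_eq_abs (v i j)]

theorem sq_norm_eq (hv : TriangularAlmostOrthonormal v ε) (k : Fin n) :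
    ‖v k‖ ^ 2 = v k k ^ 2 + ∑ j ∈ Iio k, v k j * v k j := by
  rw [← real_inner_self_eq_norm_sq, sq,
    EuclideanSpace.inner_eq_mul_add_sum_Iio (hv.apply_eq_zero_of_lt k)]

theorem one_sub_le_diag_of_val_eq_zero (hv : TriangularAlmostOrthonormal v ε) {k : Fin n}
    (hk : (k : ℕ) = 0) : 1 - ε ≤ v k k := by
  have hempty : Iio k = ∅ := Finset.eq_empty_of_forall_notMem fun j hj => by
    have := Fin.lt_def.1 (mem_Iio.1 hj); omega
  have hsq := hv.sq_norm_eq k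
  rw [hempty, sum_empty, add_zero] at hsq
  have := (abs_le.1 (hv.abs_norm_sub_one_le k)).1
  nlinarith [hv.diag_nonneg k, norm_nonneg (v k)]

theorem sum_Iio_abs_mul_le (hv : TriangularAlmostOrthonormal v ε) {i k : Fin n}
    (hsmall : 36 * (k : ℕ) * ε ≤ 1) (hcol : ∀ j < k, ∀ i, j < i → |v i j| ≤ 6 * ε)
    (hki : k ≤ i) : ∑ j ∈ Iio k, |v i j * v k j| ≤ ε := by
  have hε := hv.eps_nonneg k
  have hterm : ∀ j ∈ Iio k, |v i j * v k j| ≤ 36 * ε ^ 2 := fun j hj => by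
    have hjk := mem_Iio.1 hj
    rw [abs_mul]
    nlinarith [hcol j hjk i (hjk.trans_le hki), hcol j hjk k hjk, abs_nonneg (v i j),
      abs_nonneg (v k j)]
  calc ∑ j ∈ Iio k, |v i j * v k j| ≤ #(Iio k) • (36 * ε ^ 2) := sum_le_card_nsmul _ _ _ hterm
    _ = ε * (36 * (k : ℕ) * ε) := by rw [Fin.card_Iio, nsmul_eq_mul]; ring
    _ ≤ ε := mul_le_of_le_one_right hε hsmall

theorem one_sub_two_mul_le_diag (hv : TriangularAlmostOrthonormal v ε) {k : Fin n}
    (hsmall : 36 * (k : ℕ) * ε ≤ 1) (hε : ε ≤ 1 / 3)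
    (hcol : ∀ j < k, ∀ i, j < i → |v i j| ≤ 6 * ε) : 1 - 2 * ε ≤ v k k := by
  have hsum := (le_abs_self _).trans
    ((abs_sum_le_sum_abs _ _).trans (hv.sum_Iio_abs_mul_le hsmall hcol le_rfl))
  have hsq := hv.sq_norm_eq k
  have := (abs_le.1 (hv.abs_norm_sub_one_le k)).1
  nlinarith [hv.diag_nonneg k, norm_nonneg (v k), hv.eps_nonneg k]

theorem abs_apply_le_of_lt_of_forall_lt (hv : TriangularAlmostOrthonormal v ε) {i k : Fin n}
    (hsmall : 36 * (k : ℕ) * ε ≤ 1) (hε : ε ≤ 1 / 12)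
    (hcol : ∀ j < k, ∀ i, j < i → |v i j| ≤ 6 * ε) (hki : k < i) : |v i k| ≤ 6 * ε := by
  have hdiag := hv.one_sub_two_mul_le_diag hsmall (by linarith) hcol
  have hinner := hv.abs_inner_le i k hki.ne'
  rw [EuclideanSpace.inner_eq_mul_add_sum_Iio (hv.apply_eq_zero_of_lt k)] at hinner
  have hsum := (abs_sum_le_sum_abs _ _).trans (hv.sum_Iio_abs_mul_le hsmall hcol hki.le)
  set S := ∑ j ∈ Iio k, v i j * v k j
  have hprod : |v i k| * v k k ≤ 5 * ε :=
    calc |v i k| * v k k = |(v i k * v k k + S) - S| := by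
          rw [add_sub_cancel_right, abs_mul, abs_of_nonneg (hv.diag_nonneg k)]
      _ ≤ |v i k * v k k + S| + |S| := abs_sub _ _
      _ ≤ 5 * ε := by linarith
  nlinarith [abs_nonneg (v i k), hv.eps_nonneg k]

theorem abs_apply_le_of_lt (hv : TriangularAlmostOrthonormal v ε)
    (hsmall : ∀ k : Fin n, 36 * (k : ℕ) * ε ≤ 1) (hε : ε ≤ 1 / 12) (k : Fin n) :
    ∀ i, k < i → |v i k| ≤ 6 * ε := by
  induction k using WellFoundedLT.induction with
  | _ k ih => exact fun i => hv.abs_apply_le_of_lt_of_forall_lt (hsmall k) hε ih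

end TriangularAlmostOrthonormal

theorem triangularAlmostOrthonormal_of_isometry {n : ℕ} {ε : ℝ}
    {f : EuclideanSpace ℝ (Fin n) → EuclideanSpace ℝ (Fin n)} (hf0 : f 0 = 0)
    (hiso : ∀ x ∈ insert 0 (Set.range fun i : Fin n => EuclideanSpace.single i (1 : ℝ)),
      ∀ y ∈ insert 0 (Set.range fun i : Fin n => EuclideanSpace.single i (1 : ℝ)),
      |‖f x - f y‖ - ‖x - y‖| ≤ ε)
    (htri : ∀ i j : Fin n, i < j → f (EuclideanSpace.single i 1) j = 0)
    (hdiag : ∀ i : Fin n, 0 ≤ f (EuclideanSpace.single i 1) i) (hε : ε ≤ 1) :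
    TriangularAlmostOrthonormal (fun i => f (EuclideanSpace.single i 1)) ε := by
  have hmem : ∀ i : Fin n, EuclideanSpace.single i (1 : ℝ) ∈
      insert 0 (Set.range fun i : Fin n => EuclideanSpace.single i (1 : ℝ)) :=
    fun i => Set.mem_insert_of_mem _ ⟨i, rfl⟩
  have hnorm : ∀ i : Fin n, |‖f (EuclideanSpace.single i 1)‖ - 1| ≤ ε := fun i => by
    simpa [hf0] using hiso _ (hmem i) 0 (Set.mem_insert _ _)
  refine ⟨htri, hdiag, hnorm, fun i j hij =>
    abs_real_inner_le_of_almost_orthonormal (hnorm i) (hnorm j) ?_ hε⟩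
  simpa only [(EuclideanSpace.orthonormal_single (𝕜 := ℝ) (ι := Fin n)).norm_sub_eq_sqrt_two hij] using
    hiso _ (hmem i) _ (hmem j)

/-- Theorem 3.1 (preliminary theorem): for every `n ≥ 3` there exist positive
integers `c i j` (for `j ≤ i`), with `c₁₁ = 1`, constant subdiagonal columns
(`c i j = c (j+1) j` for `j < i`), and `c (i+1) i ≤ 9`, such that any
`ε`-isometry on `{0, e₁, …, eₙ}` fixing `0` and having triangular form on the
basis satisfies `|e′ᵢⱼ| ≤ cᵢⱼ ε` below the diagonal and
`1 - cᵢᵢ ε ≤ e′ᵢᵢ ≤ 1 + ε` on the diagonal. -/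
theorem preliminary_bounds (n : ℕ) (hn : 3 ≤ n) :
    ∃ c : Fin n → Fin n → ℕ,
      (∀ i j : Fin n, j ≤ i → 0 < c i j) ∧
      c ⟨0, by omega⟩ ⟨0, by omega⟩ = 1 ∧
      (∀ i j : Fin n, j < i → ∀ h : (j : ℕ) + 1 < n, c i j = c ⟨(j : ℕ) + 1, h⟩ j) ∧
      (∀ j : Fin n, ∀ h : (j : ℕ) + 1 < n, c ⟨(j : ℕ) + 1, h⟩ j ≤ 9) ∧
      ∀ ε : ℝ, 0 < ε →
        ε < 1 / (∑ j : Fin (n - 1),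
          ((c ⟨(j : ℕ) + 1, by have := j.isLt; omega⟩
              ⟨(j : ℕ), by have := j.isLt; omega⟩ : ℕ) : ℝ) ^ 2) →
        (∀ i : Fin n, ε < 1 / (2 * (c i i : ℝ))) →
        ε < 1 / 12 →
        ∀ D : Set (EuclideanSpace ℝ (Fin n)),
          (0 : EuclideanSpace ℝ (Fin n)) ∈ D →
          (∀ i : Fin n, EuclideanSpace.single i (1 : ℝ) ∈ D) →
          ∀ f : EuclideanSpace ℝ (Fin n) → EuclideanSpace ℝ (Fin n),
            f 0 = 0 →
            (∀ x ∈ insert (0 : EuclideanSpace ℝ (Fin n))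
                (Set.range fun i : Fin n => EuclideanSpace.single i (1 : ℝ)),
             ∀ y ∈ insert (0 : EuclideanSpace ℝ (Fin n))
                (Set.range fun i : Fin n => EuclideanSpace.single i (1 : ℝ)),
              |‖f x - f y‖ - ‖x - y‖| ≤ ε) →
            (∀ i j : Fin n, i < j → f (EuclideanSpace.single i (1 : ℝ)) j = 0) →
            (∀ i : Fin n, 0 ≤ f (EuclideanSpace.single i (1 : ℝ)) i) →
            (∀ i j : Fin n, j < i →
                -((c i j : ℝ) * ε) ≤ f (EuclideanSpace.single i (1 : ℝ)) j ∧
                f (EuclideanSpace.single i (1 : ℝ)) j ≤ (c i j : ℝ) * ε) ∧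
            (∀ i : Fin n,
                1 - (c i i : ℝ) * ε ≤ f (EuclideanSpace.single i (1 : ℝ)) i ∧
                f (EuclideanSpace.single i (1 : ℝ)) i ≤ 1 + ε) := by
  refine ⟨fun i j => if i = j then (if (i : ℕ) = 0 then 1 else 2) else 6,
    fun i j _ => by dsimp only; split_ifs <;> norm_num, by simp,
    fun i j hji h => by simp [hji.ne', Fin.ext_iff], fun j h => by simp [Fin.ext_iff], ?_⟩
  intro ε hε hσ _ hε12 D _ _ f hf0 hiso htri hdiag
  have hv := triangularAlmostOrthonormal_of_isometry hf0 hiso htri hdiag (by linarith)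
  have hsmall : ∀ k : Fin n, 36 * (k : ℕ) * ε ≤ 1 := by
    intro k
    simp only [Fin.ext_iff, Nat.add_eq_left, one_ne_zero, ↓reduceIte, Nat.cast_ofNat, sum_const,
      card_univ, Fintype.card_fin, nsmul_eq_mul, one_div, mul_inv_rev] at hσ
    have hk : ((k : ℕ) : ℝ) ≤ ((n - 1 : ℕ) : ℝ) := by exact_mod_cast Nat.le_sub_one_of_lt k.isLt
    have hN : (0 : ℝ) < ((n - 1 : ℕ) : ℝ) := by exact_mod_cast (by omega : 0 < n - 1)
    rw [lt_mul_inv_iff₀ hN] at hσ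
    nlinarith
  refine ⟨fun i j hji => ?_, fun i => ⟨?_, hv.apply_le i i⟩⟩
  · have := abs_le.1 (hv.abs_apply_le_of_lt hsmall hε12.le j i hji)
    simp only [hji.ne', if_false]
    constructor <;> push_cast <;> linarith
  · simp only [if_true]
    split_ifs with h0
    · simpa using hv.one_sub_le_diag_of_val_eq_zero h0
    · simpa using hv.one_sub_two_mul_le_diag (hsmall i) (by linarith)
        fun j _ => hv.abs_apply_le_of_lt hsmall hε12.le j
end

section
/- For every integer n ≥ 3 and every real d ≥ 1 there exist constants K > 0 and ε₀ > 0 such that: for every ε with 0 < ε < ε₀, every set D with {0, e₁, …, eₙ} ⊆ D ⊆ B_d(0) ⊆ ℝⁿ, and every function f : D → ℝⁿ with f(0) = 0 satisfying |‖f(x) − f(y)‖ − ‖x − y‖| ≤ ε for all x, y ∈ D, there exists an isometry U : D → ℝⁿ with ‖f(x) − U(x)‖ ≤ K·ε for all x ∈ D. -/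
/-!
Polarization turns an `ε`-isometry fixing `0` on a bounded set into a map that preserves inner
products up to `O(ε)`. In particular the images `f eᵢ` form an almost orthonormal family, and a
quantitative Gram–Schmidt process moves them by `O(ε)` to an orthonormal basis `(wᵢ)`. The linear
isometry `eᵢ ↦ wᵢ` is then `O(ε)`-close to `f`, since each coordinate `⟪wᵢ, f x⟫ ≈ ⟪f eᵢ, f x⟫`
of `f x` is within `O(ε)` of the coordinate `⟪eᵢ, x⟫` of `x`.
-/

open RealInnerProductSpace Finset

section AlmostOrthonormal

variable {E : Type*} [NormedAddCommGroup E] [InnerProductSpace ℝ E]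

lemma abs_norm_sub_one_le_of_abs_inner_self_sub_one_le {u : E} {η : ℝ}
    (h : |⟪u, u⟫ - 1| ≤ η) : |‖u‖ - 1| ≤ η := by
  rw [real_inner_self_eq_norm_sq] at h
  calc |‖u‖ - 1| ≤ |‖u‖ - 1| * (‖u‖ + 1) :=
        le_mul_of_one_le_right (abs_nonneg _) (by linarith [norm_nonneg u])
    _ = |‖u‖ ^ 2 - 1| := by
        rw [← abs_of_pos (by positivity : (0 : ℝ) < ‖u‖ + 1), ← abs_mul]
        congr 1
        ring
    _ ≤ η := h

lemma norm_sub_inv_norm_smul_self {p : E} (hp : p ≠ 0) : ‖p - ‖p‖⁻¹ • p‖ = |‖p‖ - 1| := by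
  have hp' : 0 < ‖p‖ := norm_pos_iff.mpr hp
  calc ‖p - ‖p‖⁻¹ • p‖ = |1 - ‖p‖⁻¹| * ‖p‖ := by
        rw [← Real.norm_eq_abs, ← norm_smul, sub_smul, one_smul]
    _ = |‖p‖ - 1| := by
        rw [← abs_of_pos hp', ← abs_mul, abs_of_pos hp', sub_mul, inv_mul_cancel₀ hp'.ne',
          one_mul]

lemma exists_unit_orthogonal_near {ι : Type*} [Fintype ι] {w : ι → E} (hw : Orthonormal ℝ w)
    {u : E} {δ η : ℝ} (hδ : ∀ i, |⟪w i, u⟫| ≤ δ) (hu : |‖u‖ - 1| ≤ η)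
    (hlt : Fintype.card ι * δ + η < 1) :
    ∃ u' : E, ‖u'‖ = 1 ∧ (∀ i, ⟪u', w i⟫ = 0) ∧ ‖u - u'‖ ≤ 2 * Fintype.card ι * δ + η := by
  set p := u - ∑ i, ⟪w i, u⟫ • w i with hp
  have hup : ‖u - p‖ ≤ Fintype.card ι * δ := by
    rw [hp, sub_sub_cancel]
    calc ‖∑ i, ⟪w i, u⟫ • w i‖ ≤ ∑ i, ‖⟪w i, u⟫ • w i‖ := norm_sum_le _ _
      _ ≤ ∑ _i : ι, δ := sum_le_sum fun i _ => by
          rw [norm_smul, hw.norm_eq_one, mul_one, Real.norm_eq_abs]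
          exact hδ i
      _ = Fintype.card ι * δ := by simp
  have hp_orth : ∀ i, ⟪p, w i⟫ = 0 := fun i => by
    rw [real_inner_comm, hp, inner_sub_right, hw.inner_right_fintype, sub_self]
  have hp_norm : |‖p‖ - 1| ≤ Fintype.card ι * δ + η :=
    calc |‖p‖ - 1| ≤ |‖p‖ - ‖u‖| + |‖u‖ - 1| := abs_sub_le _ _ _
      _ ≤ Fintype.card ι * δ + η := by
          gcongr
          exact (abs_norm_sub_norm_le p u).trans (norm_sub_rev p u ▸ hup)
  have hp0 : p ≠ 0 := by
    intro h0
    rw [h0] at hp_norm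
    norm_num at hp_norm
    linarith
  refine ⟨‖p‖⁻¹ • p, ?_, fun i => ?_, ?_⟩
  · rw [norm_smul, norm_inv, norm_norm, inv_mul_cancel₀ (norm_ne_zero_iff.mpr hp0)]
  · rw [real_inner_smul_left, hp_orth, mul_zero]
  · calc ‖u - ‖p‖⁻¹ • p‖ ≤ ‖u - p‖ + ‖p - ‖p‖⁻¹ • p‖ := norm_sub_le_norm_sub_add_norm_sub _ _ _
      _ ≤ Fintype.card ι * δ + (Fintype.card ι * δ + η) := by
          rw [norm_sub_inv_norm_smul_self hp0]
          exact add_le_add hup hp_norm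
      _ = 2 * Fintype.card ι * δ + η := by ring

theorem exists_orthonormal_near_of_abs_inner_sub_ite_le (k : ℕ) :
    ∃ C : ℝ, 1 ≤ C ∧ ∀ η : ℝ, C * η ≤ 1 →
      ∀ v : Fin k → E, (∀ i j, |⟪v i, v j⟫ - if i = j then 1 else 0| ≤ η) →
      ∃ w : Fin k → E, Orthonormal ℝ w ∧ ∀ i, ‖v i - w i‖ ≤ C * η := by
  induction k with
  | zero => exact ⟨1, le_rfl, fun _ _ v _ => ⟨v, .of_isEmpty v, fun i => i.elim0⟩⟩
  | succ k ih =>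
    obtain ⟨C₀, hC₀, H⟩ := ih
    set B : ℝ := 2 * C₀ + 1 with hB_def
    have hkB : 0 ≤ k * B := mul_nonneg k.cast_nonneg (by rw [hB_def]; linarith)
    refine ⟨C₀ + 2 * (k * B + 1), by linarith, fun η hCη v hv => ?_⟩
    have hη : 0 ≤ η := (abs_nonneg _).trans (hv 0 0)
    have hkBη : 0 ≤ k * B * η := mul_nonneg hkB hη
    have hη1 : η ≤ 1 := by nlinarith
    obtain ⟨w, hw, hvw⟩ := H η (by nlinarith) (fun i => v i.succ) fun i j => by
      simpa [Fin.succ_inj] using hv i.succ j.succ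
    have hu : |‖v 0‖ - 1| ≤ η :=
      abs_norm_sub_one_le_of_abs_inner_self_sub_one_le (by simpa using hv 0 0)
    have hu2 : ‖v 0‖ ≤ 2 := by linarith [(abs_le.mp hu).2]
    have hδ : ∀ i, |⟪w i, v 0⟫| ≤ B * η := fun i => by
      have hsplit : ⟪w i, v 0⟫ = ⟪w i - v i.succ, v 0⟫ + ⟪v i.succ, v 0⟫ := by
        rw [inner_sub_left, sub_add_cancel]
      have h₁ : |⟪w i - v i.succ, v 0⟫| ≤ C₀ * η * 2 :=
        (abs_real_inner_le_norm _ _).trans <|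
          mul_le_mul (norm_sub_rev (v i.succ) (w i) ▸ hvw i) hu2 (norm_nonneg _) (by positivity)
      have h₂ : |⟪v i.succ, v 0⟫| ≤ η := by simpa [Fin.succ_ne_zero] using hv i.succ 0
      calc |⟪w i, v 0⟫| ≤ C₀ * η * 2 + η := hsplit ▸ (abs_add_le _ _).trans (add_le_add h₁ h₂)
        _ = B * η := by ring
    obtain ⟨u, hu1, hu_orth, hvu⟩ :=
      exists_unit_orthogonal_near hw hδ hu (by simp only [Fintype.card_fin]; nlinarith)
    refine ⟨Matrix.vecCons u w, orthonormal_vecCons_iff.mpr ⟨hu1, hu_orth, hw⟩, ?_⟩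
    refine Fin.cases ?_ (fun i => ?_)
    · simp only [Matrix.cons_val_zero, Fintype.card_fin] at hvu ⊢
      nlinarith
    · simp only [Matrix.cons_val_succ]
      nlinarith [hvw i]

end AlmostOrthonormal

section NearIsometry

variable {E F : Type*} [NormedAddCommGroup E] [InnerProductSpace ℝ E]
  [NormedAddCommGroup F] [InnerProductSpace ℝ F]

lemma abs_sq_sub_sq_le {a b r ε : ℝ} (hb : 0 ≤ b) (hbr : b ≤ r)
    (h : |a - b| ≤ ε) : |a ^ 2 - b ^ 2| ≤ (2 * r + ε) * ε := by
  have h' := abs_le.mp h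
  rw [abs_le]
  constructor <;> nlinarith

lemma abs_inner_sub_inner_le {x y : E} {x' y' : F} {d ε : ℝ} (hx : ‖x‖ ≤ d) (hy : ‖y‖ ≤ d)
    (hx' : |‖x'‖ - ‖x‖| ≤ ε) (hy' : |‖y'‖ - ‖y‖| ≤ ε) (hxy' : |‖x' - y'‖ - ‖x - y‖| ≤ ε) :
    |⟪x', y'⟫ - ⟪x, y⟫| ≤ 3 / 2 * (4 * d + ε) * ε := by
  have hε : 0 ≤ ε := (abs_nonneg _).trans hx'
  have hxy : ‖x - y‖ ≤ 2 * d := (norm_sub_le x y).trans (by linarith)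
  have h₁ := abs_le.mp (abs_sq_sub_sq_le (norm_nonneg _) hx hx')
  have h₂ := abs_le.mp (abs_sq_sub_sq_le (norm_nonneg _) hy hy')
  have h₃ := abs_le.mp (abs_sq_sub_sq_le (norm_nonneg _) hxy hxy')
  rw [norm_sub_sq_real, norm_sub_sq_real] at h₃
  rw [abs_le]
  constructor <;> nlinarith [norm_nonneg x]

end NearIsometry

section Coordinates

variable {ι E F : Type*} [Fintype ι] [NormedAddCommGroup E] [InnerProductSpace ℝ E]
  [NormedAddCommGroup F] [InnerProductSpace ℝ F]

lemma OrthonormalBasis.norm_le_card_mul (b : OrthonormalBasis ι ℝ F) {z : F} {r : ℝ}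
    (h : ∀ i, |⟪b i, z⟫| ≤ r) : ‖z‖ ≤ Fintype.card ι * r := by
  calc ‖z‖ = ‖∑ i, ⟪b i, z⟫ • b i‖ := by rw [b.sum_repr']
    _ ≤ ∑ i, ‖⟪b i, z⟫ • b i‖ := norm_sum_le _ _
    _ ≤ ∑ _i : ι, r := sum_le_sum fun i _ => by
        rw [norm_smul, b.orthonormal.norm_eq_one, mul_one, Real.norm_eq_abs]
        exact h i
    _ = Fintype.card ι * r := by simp

lemma OrthonormalBasis.norm_sub_equiv_le (e : OrthonormalBasis ι ℝ E)
    (b : OrthonormalBasis ι ℝ F) {v : ι → F} {δ : ℝ} (hv : ∀ i, ‖v i - b i‖ ≤ δ)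
    {x : E} {y : F} {R η : ℝ} (hy : ‖y‖ ≤ R) (h : ∀ i, |⟪v i, y⟫ - ⟪e i, x⟫| ≤ η) :
    ‖y - e.equiv b (Equiv.refl ι) x‖ ≤ Fintype.card ι * (δ * R + η) := by
  refine b.norm_le_card_mul fun i => ?_
  have hcoord : ⟪b i, y - e.equiv b (Equiv.refl ι) x⟫ = ⟪b i - v i, y⟫ + (⟪v i, y⟫ - ⟪e i, x⟫) := by
    have hbi : b i = e.equiv b (Equiv.refl ι) (e i) := (e.equiv_apply_basis b (.refl ι) i).symm
    rw [inner_sub_right, hbi, LinearIsometryEquiv.inner_map_map, ← hbi, inner_sub_left]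
    ring
  rw [hcoord]
  refine (abs_add_le _ _).trans (add_le_add ?_ (h i))
  exact (abs_real_inner_le_norm _ _).trans <|
    mul_le_mul (norm_sub_rev (b i) (v i) ▸ hv i) hy (norm_nonneg _)
      ((norm_nonneg _).trans (hv i))

end Coordinates

/-- Qualitative form of the main theorem: for every `n ≥ 3` and `d ≥ 1` there
are constants `K > 0` and `ε₀ > 0` such that every `ε`-isometry (`0 < ε < ε₀`)
fixing the origin, defined on a set `D` with `{0, e₁, …, eₙ} ⊆ D ⊆ B_d(0)`,
is within `K ε` of an isometry of `D` into `ℝⁿ`. -/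
theorem stability_constant_exists (n : ℕ) (hn : 3 ≤ n) (d : ℝ) (hd : 1 ≤ d) :
    ∃ K > (0 : ℝ), ∃ ε₀ > (0 : ℝ),
      ∀ ε : ℝ, 0 < ε → ε < ε₀ →
      ∀ D : Set (EuclideanSpace ℝ (Fin n)),
        (0 : EuclideanSpace ℝ (Fin n)) ∈ D →
        (∀ i : Fin n, EuclideanSpace.single i (1 : ℝ) ∈ D) →
        D ⊆ Metric.closedBall 0 d →
        ∀ f : EuclideanSpace ℝ (Fin n) → EuclideanSpace ℝ (Fin n),
          f 0 = 0 →
          (∀ x ∈ D, ∀ y ∈ D, |‖f x - f y‖ - ‖x - y‖| ≤ ε) →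
          ∃ U : EuclideanSpace ℝ (Fin n) → EuclideanSpace ℝ (Fin n),
            (∀ x ∈ D, ∀ y ∈ D, ‖U x - U y‖ = ‖x - y‖) ∧
            ∀ x ∈ D, ‖f x - U x‖ ≤ K * ε := by
  obtain ⟨C, hC, hGS⟩ :=
    exists_orthonormal_near_of_abs_inner_sub_ite_le (E := EuclideanSpace ℝ (Fin n)) n
  have hn0 : (0 : ℝ) < n := by exact_mod_cast (by omega : 0 < n)
  refine ⟨n * (C * (6 * d + 2) * (d + 1) + (6 * d + 2)), by positivity,
    min 1 (1 / (C * (6 * d + 2))), by positivity, ?_⟩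
  intro ε _ hε₀ D hD0 hDe hDd f hf0 hf
  have hε1 : ε ≤ 1 := (hε₀.trans_le (min_le_left _ _)).le
  have hCε : C * ((6 * d + 2) * ε) ≤ 1 := by
    have := (hε₀.trans_le (min_le_right _ _)).le
    rw [le_div_iff₀ (by positivity)] at this
    linarith
  have hnorm : ∀ x ∈ D, ‖x‖ ≤ d := fun x hx => by simpa using hDd hx
  have hf_norm : ∀ x ∈ D, |‖f x‖ - ‖x‖| ≤ ε := fun x hx => by simpa [hf0] using hf x hx 0 hD0
  have hinner : ∀ x ∈ D, ∀ y ∈ D, |⟪f x, f y⟫ - ⟪x, y⟫| ≤ (6 * d + 2) * ε := fun x hx y hy =>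
    (abs_inner_sub_inner_le (hnorm x hx) (hnorm y hy) (hf_norm x hx) (hf_norm y hy)
      (hf x hx y hy)).trans (by nlinarith)
  set e := EuclideanSpace.basisFun (Fin n) ℝ
  have he : ∀ i, e i ∈ D := fun i => by simpa [e] using hDe i
  obtain ⟨w, hw, hvw⟩ := hGS _ hCε (fun i => f (e i)) fun i j => by
    simpa [orthonormal_iff_ite.mp e.orthonormal] using hinner _ (he i) _ (he j)
  let b := OrthonormalBasis.mk hw (hw.linearIndependent.span_eq_top_of_card_eq_finrank'
    (by simp)).ge
  refine ⟨e.equiv b (.refl _), fun x _ y _ => by rw [← map_sub, LinearIsometryEquiv.norm_map],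
    fun x hx => ?_⟩
  have hfx : ‖f x‖ ≤ d + 1 := by linarith [(abs_le.mp (hf_norm x hx)).2, hnorm x hx]
  refine (e.norm_sub_equiv_le b (v := fun i => f (e i)) (by simpa [b] using hvw) hfx
    fun i => hinner _ (he i) x hx).trans (le_of_eq ?_)
  simp only [Fintype.card_fin]
  ring
end

section
/- Let n ≥ 3 be an integer, d ≥ 1 a real number, and 0 < ε < 1. Let D be a set with {0, e₁, …, eₙ} ⊆ D ⊆ B_d(0) ⊆ ℝⁿ, and let f : D → ℝⁿ satisfy f(0) = 0 and |‖f(x) − f(y)‖ − ‖x − y‖| ≤ ε for all x, y ∈ D. Assume f has triangular form on the basis, i.e. the j-th coordinate e′ᵢⱼ of f(eᵢ) vanishes for j > i, and suppose there are real numbers c_{ij} ≥ 1 (for 1 ≤ j ≤ i ≤ n) with |e′ᵢⱼ| ≤ c_{ij}·ε for all j < i and 1 − c_{ii}·ε ≤ e′ᵢᵢ ≤ 1 + ε for all i. Then for all x ∈ D, ‖f(x) − x‖ ≤ [ Σ_{i=1}^{n} ( (2 + Σ_{j=1}^{i} c_{ij})·d + 4 + Σ_{j=1}^{i} c_{ij}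 )² ]^{1/2} · ε; in particular the identity map U(x) = x is an isometry within distance [Σ_{i=1}^{n}((2+Σ_{j=1}^{i}c_{ij})d+4+Σ_{j=1}^{i}c_{ij})²]^{1/2}·ε of f. -/
/-!
Each coordinate of `f x` is compared with `⟪f x, f eᵢ⟫` in two ways. By polarization,
`⟪f x, f eᵢ⟫` is within `O((d + 1) ε)` of `⟪x, eᵢ⟫ = xᵢ`, since `f` distorts the three norms
`‖x‖`, `‖eᵢ‖`, `‖x - eᵢ‖` by at most `ε`. By the triangular form, `f eᵢ - eᵢ` is supported on
the coordinates `j ≤ i`, where it is bounded by `cᵢⱼ ε`, so `⟪f x, f eᵢ⟫` is within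
`‖f x‖ Σⱼ≤ᵢ cᵢⱼ ε` of `(f x)ᵢ`. Summing the squares of the coordinate errors gives the bound.
-/

open scoped RealInnerProductSpace

theorem abs_sq_sub_sq_le_s5 {s t ε A : ℝ} (hs : 0 ≤ s) (ht : 0 ≤ t) (htA : t ≤ A)
    (h : |s - t| ≤ ε) : |s ^ 2 - t ^ 2| ≤ ε * (2 * A + ε) := by
  have hst : s + t ≤ 2 * A + ε := by linarith [(abs_le.1 h).2]
  rw [show s ^ 2 - t ^ 2 = (s - t) * (s + t) by ring, abs_mul, abs_of_nonneg (add_nonneg hs ht)]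
  exact mul_le_mul h hst (add_nonneg hs ht) ((abs_nonneg _).trans h)

section Polarization

variable {E F : Type*} [NormedAddCommGroup E] [InnerProductSpace ℝ E]
  [NormedAddCommGroup F] [InnerProductSpace ℝ F]

theorem abs_inner_sub_inner_le_of_abs_norm_sub_le {u v : E} {u' v' : F} {a b ε : ℝ}
    (hu : ‖u‖ ≤ a) (hv : ‖v‖ ≤ b) (hu' : |‖u'‖ - ‖u‖| ≤ ε) (hv' : |‖v'‖ - ‖v‖| ≤ ε)
    (huv' : |‖u' - v'‖ - ‖u - v‖| ≤ ε) :
    |⟪u', v'⟫ - ⟪u, v⟫| ≤ (4 * (a + b) + 3 * ε) * ε / 2 := by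
  have huv : ‖u - v‖ ≤ a + b := (norm_sub_le u v).trans (add_le_add hu hv)
  have h₁ := abs_le.1 (abs_sq_sub_sq_le_s5 (norm_nonneg _) (norm_nonneg _) hu hu')
  have h₂ := abs_le.1 (abs_sq_sub_sq_le_s5 (norm_nonneg _) (norm_nonneg _) hv hv')
  have h₃ := abs_le.1 (abs_sq_sub_sq_le_s5 (norm_nonneg _) (norm_nonneg _) huv huv')
  have hp := norm_sub_sq_real u v
  have hp' := norm_sub_sq_real u' v'
  rw [abs_le]
  constructor <;> linarith

theorem abs_inner_map_sub_inner_le {D : Set E} {f : E → F} {ε a b : ℝ}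
    (hf : ∀ x ∈ D, ∀ y ∈ D, |‖f x - f y‖ - ‖x - y‖| ≤ ε) (h0 : 0 ∈ D) (hf0 : f 0 = 0)
    {x y : E} (hx : x ∈ D) (hy : y ∈ D) (hxa : ‖x‖ ≤ a) (hyb : ‖y‖ ≤ b) :
    |⟪f x, f y⟫ - ⟪x, y⟫| ≤ (4 * (a + b) + 3 * ε) * ε / 2 :=
  abs_inner_sub_inner_le_of_abs_norm_sub_le hxa hyb (by simpa [hf0] using hf x hx 0 h0)
    (by simpa [hf0] using hf y hy 0 h0) (hf x hx y hy)

end Polarization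

section Coordinates

variable {ι : Type*} [Fintype ι]

theorem EuclideanSpace.abs_inner_le_norm_mul_sum (u v : EuclideanSpace ℝ ι) (s : Finset ι)
    (b : ι → ℝ) (hv : ∀ j ∉ s, v j = 0) (hb : ∀ j ∈ s, |v j| ≤ b j) :
    |⟪u, v⟫| ≤ ‖u‖ * ∑ j ∈ s, b j := by
  classical
  have hsum : ⟪u, v⟫ = ∑ j ∈ s, u j * v j := by
    rw [PiLp.inner_apply, ← Finset.sum_subset (Finset.subset_univ s)]
    · simp [mul_comm]
    · intro j _ hj
      simp [hv j hj]
  rw [hsum, Finset.mul_sum]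
  refine (Finset.abs_sum_le_sum_abs _ _).trans (Finset.sum_le_sum fun j hj => ?_)
  rw [abs_mul]
  exact mul_le_mul (by simpa using PiLp.norm_apply_le u j) (hb j hj) (abs_nonneg _)
    (norm_nonneg _)

theorem EuclideanSpace.norm_le_sqrt_sum_sq_mul {v : EuclideanSpace ℝ ι} {B : ι → ℝ} {ε : ℝ}
    (hε : 0 ≤ ε) (hv : ∀ i, |v i| ≤ B i * ε) : ‖v‖ ≤ Real.sqrt (∑ i, B i ^ 2) * ε := by
  rw [EuclideanSpace.norm_eq, ← Real.sqrt_sq hε, ← Real.sqrt_mul (by positivity), Finset.sum_mul]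
  refine Real.sqrt_le_sqrt (Finset.sum_le_sum fun i _ => ?_)
  rw [Real.norm_eq_abs, ← mul_pow]
  exact pow_le_pow_left₀ (abs_nonneg _) (hv i) 2

theorem EuclideanSpace.abs_inner_sub_apply_le_of_triangular [LinearOrder ι]
    [LocallyFiniteOrderBot ι] (u w : EuclideanSpace ℝ ι) (i : ι) (c : ι → ℝ) {ε : ℝ}
    (hup : ∀ j, i < j → w j = 0) (hlow : ∀ j < i, |w j| ≤ c j * ε) (hdiag : |w i - 1| ≤ c i * ε) :
    |⟪u, w⟫ - u i| ≤ ‖u‖ * ((∑ j ∈ Finset.Iic i, c j) * ε) := by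
  have hinner : ⟪u, w⟫ - u i = ⟪u, w - EuclideanSpace.single i 1⟫ := by
    simp [inner_sub_right, EuclideanSpace.inner_single_right]
  rw [hinner, Finset.sum_mul]
  refine abs_inner_le_norm_mul_sum u _ _ (fun j => c j * ε) (fun j hj => ?_) (fun j hj => ?_)
  · have hij : i < j := lt_of_not_ge (by simpa using hj)
    simp [hup j hij, hij.ne']
  · rcases (Finset.mem_Iic.1 hj).lt_or_eq with hji | rfl
    · simpa [hji.ne] using hlow j hji
    · simpa using hdiag

end Coordinates

theorem dist_to_identity_general (n : ℕ) (d : ℝ)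
    (ε : ℝ) (hε0 : 0 < ε) (hε1 : ε < 1)
    (D : Set (EuclideanSpace ℝ (Fin n)))
    (h0D : (0 : EuclideanSpace ℝ (Fin n)) ∈ D)
    (heD : ∀ i : Fin n, EuclideanSpace.single i (1 : ℝ) ∈ D)
    (hDd : D ⊆ Metric.closedBall 0 d)
    (f : EuclideanSpace ℝ (Fin n) → EuclideanSpace ℝ (Fin n))
    (hf0 : f 0 = 0)
    (hiso : ∀ x ∈ D, ∀ y ∈ D, |‖f x - f y‖ - ‖x - y‖| ≤ ε)
    (htri : ∀ i j : Fin n, i < j → f (EuclideanSpace.single i (1 : ℝ)) j = 0)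
    (c : Fin n → Fin n → ℝ)
    (hc1 : ∀ i j : Fin n, j ≤ i → 1 ≤ c i j)
    (hcoff : ∀ i j : Fin n, j < i → |f (EuclideanSpace.single i (1 : ℝ)) j| ≤ c i j * ε)
    (hcdiag : ∀ i : Fin n,
      1 - c i i * ε ≤ f (EuclideanSpace.single i (1 : ℝ)) i ∧
      f (EuclideanSpace.single i (1 : ℝ)) i ≤ 1 + ε) :
    ∀ x ∈ D, ‖f x - x‖ ≤
      Real.sqrt (∑ i : Fin n,
        ((2 + ∑ j ∈ Finset.Iic i, c i j) * d + 4 + ∑ j ∈ Finset.Iic i, c i j) ^ 2) * ε := by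
  intro x hx
  have hxd : ‖x‖ ≤ d := by simpa using hDd hx
  have hfxd : ‖f x‖ ≤ d + ε := by
    linarith [(abs_le.1 (by simpa [hf0] using hiso x hx 0 h0D : |‖f x‖ - ‖x‖| ≤ ε)).2]
  refine EuclideanSpace.norm_le_sqrt_sum_sq_mul hε0.le fun i => ?_
  set e := EuclideanSpace.single i (1 : ℝ)
  set S := ∑ j ∈ Finset.Iic i, c i j
  have hS : 0 ≤ S :=
    Finset.sum_nonneg fun j hj => zero_le_one.trans (hc1 i j (Finset.mem_Iic.1 hj))
  have hdiag : |f e i - 1| ≤ c i i * ε := by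
    have := hc1 i i le_rfl
    rw [abs_le]
    constructor <;> nlinarith [hcdiag i]
  have htriangular : |⟪f x, f e⟫ - f x i| ≤ ‖f x‖ * (S * ε) :=
    EuclideanSpace.abs_inner_sub_apply_le_of_triangular _ _ i (c i) (htri i) (hcoff i) hdiag
  have hpolar : |⟪f x, f e⟫ - x i| ≤ (4 * (d + 1) + 3 * ε) * ε / 2 := by
    simpa [EuclideanSpace.inner_single_right] using
      abs_inner_map_sub_inner_le hiso h0D hf0 hx (heD i) hxd (by simp)
  calc |f x i - x i| ≤ |⟪f x, f e⟫ - f x i| + |⟪f x, f e⟫ - x i| := by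
        rw [abs_sub_comm _ (f x i)]; exact abs_sub_le _ _ _
    _ ≤ (d + ε) * (S * ε) + (4 * (d + 1) + 3 * ε) * ε / 2 :=
        add_le_add (htriangular.trans (by gcongr)) hpolar
    _ ≤ ((2 + S) * d + 4 + S) * ε := by nlinarith [mul_nonneg (sub_nonneg.2 hε1.le) hS]

/-- If an `ε`-isometry `f` on `D` (with `{0, e₁, …, eₙ} ⊆ D ⊆ B_d(0)`, `f 0 = 0`)
has triangular form on the basis, with `|e′ᵢⱼ| ≤ cᵢⱼ ε` below the diagonal and
`1 - cᵢᵢ ε ≤ e′ᵢᵢ ≤ 1 + ε` on the diagonal for some constants `cᵢⱼ ≥ 1`, then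
`f` is within `√(Σᵢ ((2 + Σⱼ cᵢⱼ) d + 4 + Σⱼ cᵢⱼ)²) ε` of the identity map on `D`. -/
theorem dist_to_identity (n : ℕ) (hn : 3 ≤ n) (d : ℝ) (hd : 1 ≤ d)
    (ε : ℝ) (hε0 : 0 < ε) (hε1 : ε < 1)
    (D : Set (EuclideanSpace ℝ (Fin n)))
    (h0D : (0 : EuclideanSpace ℝ (Fin n)) ∈ D)
    (heD : ∀ i : Fin n, EuclideanSpace.single i (1 : ℝ) ∈ D)
    (hDd : D ⊆ Metric.closedBall 0 d)
    (f : EuclideanSpace ℝ (Fin n) → EuclideanSpace ℝ (Fin n))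
    (hf0 : f 0 = 0)
    (hiso : ∀ x ∈ D, ∀ y ∈ D, |‖f x - f y‖ - ‖x - y‖| ≤ ε)
    (htri : ∀ i j : Fin n, i < j → f (EuclideanSpace.single i (1 : ℝ)) j = 0)
    (c : Fin n → Fin n → ℝ)
    (hc1 : ∀ i j : Fin n, j ≤ i → 1 ≤ c i j)
    (hcoff : ∀ i j : Fin n, j < i → |f (EuclideanSpace.single i (1 : ℝ)) j| ≤ c i j * ε)
    (hcdiag : ∀ i : Fin n,
      1 - c i i * ε ≤ f (EuclideanSpace.single i (1 : ℝ)) i ∧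
      f (EuclideanSpace.single i (1 : ℝ)) i ≤ 1 + ε) :
    ∀ x ∈ D, ‖f x - x‖ ≤
      Real.sqrt (∑ i : Fin n,
        ((2 + ∑ j ∈ Finset.Iic i, c i j) * d + 4 + ∑ j ∈ Finset.Iic i, c i j) ^ 2) * ε :=
  dist_to_identity_general n d ε hε0 hε1 D h0D heD hDd f hf0 hiso htri c hc1 hcoff hcdiag
end

section
/- Let n ≥ 2 be an integer and 0 < ε < 1/12. Let f be a function defined on a subset of ℝⁿ containing {0, e₁, e₂} with f(0) = 0, satisfying |‖f(x) − f(y)‖ − ‖x − y‖| ≤ ε for all x, y ∈ {0, e₁, e₂}, and suppose f(e₁) = (e′₁₁, 0, …, 0) and f(e₂) = (e′₂₁, e′₂₂, 0, …, 0) with e′₁₁ ≥ 0 and e′₂₂ ≥ 0. Then (−(4 + 2√2)·ε + ε²)/(2(1 − ε)) ≤ e′₂₁ ≤ ((4 + 2√2)·ε + ε²)/(2(1 − ε)); in particular |e′₂₁| ≤ 4·ε. -/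
/-!
Polarization gives `2⟪u, v⟫ = ‖u‖² + ‖v‖² - ‖u - v‖²` for `u = f e₁`, `v = f e₂`, and the
ε-isometry condition pins these three norms to within `ε` of `1`, `1`, `√2`, so `2⟪u, v⟫`
lies between `-(4 + 2√2)ε + ε²` and `(4 + 2√2)ε + ε²`. Since `u` lies on the first axis,
`⟪u, v⟫ = e′₁₁ e′₂₁` with `e′₁₁ = ‖u‖ ≥ 1 - ε`, and dividing by `2e′₁₁` bounds `e′₂₁`.
-/

open scoped InnerProductSpace

lemma sq_bounds_of_abs_sub_le {t r ε : ℝ} (ht : 0 ≤ t) (hεr : ε ≤ r) (h : |t - r| ≤ ε) :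
    (r - ε) ^ 2 ≤ t ^ 2 ∧ t ^ 2 ≤ (r + ε) ^ 2 := by
  rw [abs_le] at h
  exact ⟨pow_le_pow_left₀ (by linarith) (by linarith) 2, pow_le_pow_left₀ ht (by linarith) 2⟩

lemma le_div_of_mul_le_of_le {a b m K : ℝ} (hm : 0 < m) (hma : m ≤ a) (hK : 0 ≤ K)
    (h : a * b ≤ K) : b ≤ K / m :=
  calc b ≤ K / a := (le_div_iff₀ (hm.trans_le hma)).2 (by linarith [mul_comm a b])
    _ ≤ K / m := div_le_div_of_nonneg_left hK hm hma

lemma norm_sub_eq_sqrt_two {E : Type*} [NormedAddCommGroup E] [InnerProductSpace ℝ E] {u v : E}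
    (hu : ‖u‖ = 1) (hv : ‖v‖ = 1) (huv : ⟪u, v⟫_ℝ = 0) : ‖u - v‖ = √2 := by
  rw [← Real.sqrt_sq (norm_nonneg _), norm_sub_sq_real, hu, hv, huv]
  norm_num

lemma two_mul_inner_bounds {E : Type*} [NormedAddCommGroup E] [InnerProductSpace ℝ E]
    {u v : E} {ε : ℝ} (hε : ε ≤ 1) (hu : |‖u‖ - 1| ≤ ε) (hv : |‖v‖ - 1| ≤ ε)
    (huv : |‖u - v‖ - √2| ≤ ε) :
    -(4 + 2 * √2) * ε + ε ^ 2 ≤ 2 * ⟪u, v⟫_ℝ ∧ 2 * ⟪u, v⟫_ℝ ≤ (4 + 2 * √2) * ε + ε ^ 2 := by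
  have hsqrt2 : √2 ^ 2 = 2 := Real.sq_sqrt zero_le_two
  have hε_sqrt2 : ε ≤ √2 := hε.trans (Real.one_le_sqrt.2 one_le_two)
  obtain ⟨hu₁, hu₂⟩ := sq_bounds_of_abs_sub_le (norm_nonneg _) hε hu
  obtain ⟨hv₁, hv₂⟩ := sq_bounds_of_abs_sub_le (norm_nonneg _) hε hv
  obtain ⟨huv₁, huv₂⟩ := sq_bounds_of_abs_sub_le (norm_nonneg _) hε_sqrt2 huv
  have polarization := norm_sub_sq_real u v
  constructor <;> nlinarith

lemma EuclideanSpace.eq_single_of_apply_eq_zero {ι : Type*} [Fintype ι] [DecidableEq ι]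
    {u : EuclideanSpace ℝ ι} {i : ι} (hu : ∀ j ≠ i, u j = 0) :
    u = EuclideanSpace.single i (u i) := by
  ext j
  by_cases hj : j = i
  · subst hj; simp
  · simp [hu j hj, hj]

theorem EuclideanSpace.apply_bounds_of_almost_orthonormal {ι : Type*} [Fintype ι]
    [DecidableEq ι] {u v : EuclideanSpace ℝ ι} {i : ι} {ε : ℝ} (hε0 : 0 ≤ ε) (hε : ε < 1 / 12)
    (hu_axis : ∀ j ≠ i, u j = 0) (hui : 0 ≤ u i) (hu : |‖u‖ - 1| ≤ ε) (hv : |‖v‖ - 1| ≤ ε)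
    (huv : |‖u - v‖ - √2| ≤ ε) :
    ((-(4 + 2 * √2) * ε + ε ^ 2) / (2 * (1 - ε)) ≤ v i ∧
      v i ≤ ((4 + 2 * √2) * ε + ε ^ 2) / (2 * (1 - ε))) ∧ |v i| ≤ 4 * ε := by
  have hsqrt2 : √2 ≤ 3 / 2 := by
    rw [Real.sqrt_le_left (by norm_num)]; norm_num
  have hnorm : ‖u‖ = u i := by
    rw [EuclideanSpace.eq_single_of_apply_eq_zero hu_axis, PiLp.norm_single, Real.norm_eq_abs,
      PiLp.single_apply, if_pos rfl, abs_of_nonneg hui]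
  have hinner : ⟪u, v⟫_ℝ = u i * v i := by
    rw [EuclideanSpace.eq_single_of_apply_eq_zero hu_axis, EuclideanSpace.inner_single_left]
    simp
  obtain ⟨hlower, hupper⟩ := two_mul_inner_bounds (by linarith) hu hv huv
  rw [hinner] at hlower hupper
  rw [hnorm, abs_le] at hu
  have hm : 0 < 2 * (1 - ε) := by linarith
  have hma : 2 * (1 - ε) ≤ 2 * u i := by linarith
  have hb_le : v i ≤ ((4 + 2 * √2) * ε + ε ^ 2) / (2 * (1 - ε)) :=
    le_div_of_mul_le_of_le hm hma (by positivity) (by linarith)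
  have hb_ge : (-(4 + 2 * √2) * ε + ε ^ 2) / (2 * (1 - ε)) ≤ v i := by
    have : -v i ≤ ((4 + 2 * √2) * ε - ε ^ 2) / (2 * (1 - ε)) :=
      le_div_of_mul_le_of_le hm hma (by nlinarith [mul_nonneg hε0 (Real.sqrt_nonneg 2)])
        (by linarith)
    rw [show -(4 + 2 * √2) * ε + ε ^ 2 = -((4 + 2 * √2) * ε - ε ^ 2) by ring, neg_div]
    linarith
  -- `(4 + 2√2)ε + ε² ≤ 8ε(1 - ε)` as soon as `9ε ≤ 4 - 2√2`
  have hK : ((4 + 2 * √2) * ε + ε ^ 2) / (2 * (1 - ε)) ≤ 4 * ε := by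
    rw [div_le_iff₀ hm]; nlinarith
  have hK' : -(4 * ε) ≤ (-(4 + 2 * √2) * ε + ε ^ 2) / (2 * (1 - ε)) := by
    rw [le_div_iff₀ hm]; nlinarith
  exact ⟨⟨hb_ge, hb_le⟩, abs_le.2 ⟨hK'.trans hb_ge, hb_le.trans hK⟩⟩

/-- If `f 0 = 0`, `f` is an `ε`-isometry on `{0, e₁, e₂}` (`0 < ε < 1/12`) with
`f e₁ = (e′₁₁, 0, …, 0)`, `f e₂ = (e′₂₁, e′₂₂, 0, …, 0)`, `e′₁₁, e′₂₂ ≥ 0`, then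
`(−(4 + 2√2)ε + ε²)/(2(1−ε)) ≤ e′₂₁ ≤ ((4 + 2√2)ε + ε²)/(2(1−ε))`;
in particular `|e′₂₁| ≤ 4ε`. -/
theorem subdiagonal_bound_two_one (n : ℕ) (hn : 2 ≤ n) (ε : ℝ)
    (hε0 : 0 < ε) (hε : ε < 1 / 12)
    (f : EuclideanSpace ℝ (Fin n) → EuclideanSpace ℝ (Fin n))
    (hf0 : f 0 = 0)
    (hiso : ∀ x ∈ ({0, EuclideanSpace.single ⟨0, by omega⟩ (1 : ℝ),
              EuclideanSpace.single ⟨1, by omega⟩ (1 : ℝ)} :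
              Set (EuclideanSpace ℝ (Fin n))),
            ∀ y ∈ ({0, EuclideanSpace.single ⟨0, by omega⟩ (1 : ℝ),
              EuclideanSpace.single ⟨1, by omega⟩ (1 : ℝ)} :
              Set (EuclideanSpace ℝ (Fin n))),
            |‖f x - f y‖ - ‖x - y‖| ≤ ε)
    (htri1 : ∀ j : Fin n, j ≠ ⟨0, by omega⟩ →
      f (EuclideanSpace.single ⟨0, by omega⟩ (1 : ℝ)) j = 0)
    (hpos1 : 0 ≤ f (EuclideanSpace.single ⟨0, by omega⟩ (1 : ℝ)) ⟨0, by omega⟩) :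
    ((-(4 + 2 * Real.sqrt 2) * ε + ε ^ 2) / (2 * (1 - ε)) ≤
        f (EuclideanSpace.single ⟨1, by omega⟩ (1 : ℝ)) ⟨0, by omega⟩ ∧
      f (EuclideanSpace.single ⟨1, by omega⟩ (1 : ℝ)) ⟨0, by omega⟩ ≤
        ((4 + 2 * Real.sqrt 2) * ε + ε ^ 2) / (2 * (1 - ε))) ∧
    |f (EuclideanSpace.single ⟨1, by omega⟩ (1 : ℝ)) ⟨0, by omega⟩| ≤ 4 * ε := by
  set e₁ : EuclideanSpace ℝ (Fin n) := EuclideanSpace.single ⟨0, by omega⟩ 1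
  set e₂ : EuclideanSpace ℝ (Fin n) := EuclideanSpace.single ⟨1, by omega⟩ 1
  have he₁₂ : ‖e₁ - e₂‖ = √2 :=
    norm_sub_eq_sqrt_two (by simp [e₁]) (by simp [e₂])
      (EuclideanSpace.orthonormal_single.2 (by simp))
  have hu := hiso e₁ (by simp) 0 (by simp)
  have hv := hiso e₂ (by simp) 0 (by simp)
  have huv := hiso e₁ (by simp) e₂ (by simp)
  simp only [hf0, sub_zero] at hu hv
  rw [he₁₂] at huv
  exact EuclideanSpace.apply_bounds_of_almost_orthonormal hε0.le hε htri1 hpos1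
    (by simpa [e₁] using hu) (by simpa [e₂] using hv) huv
end
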